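/- arXiv:1202.3587 — 3 statements merged into one kernel-verified Lean document; each statement's English description precedes it below -/
import Mathlib

section
/- Let H_n be the n×n tridiagonal matrix with main diagonal entries (3, 1, 1, ..., 1), subdiagonal entries all 1, and superdiagonal entries all 2. Then the permanent of H_n equals J_{n+2}, the (n+2)-nd Jacobsthal number. -/
def jacobsthal : ℕ → ℤ
  | 0 => 0
  | 1 => 1
  | n + 2 => jacobsthal (n + 1) + 2 * jacobsthal n

def permanent {n : ℕ} (A : Matrix (Fin n) (Fin n) ℤ) : ℤ :=
  ∑ σ : Equiv.Perm (Fin n), ∏ i, A i (σ i)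

def Hmat (n : ℕ) : Matrix (Fin n) (Fin n) ℤ :=
  Matrix.of fun i j =>
    if (i : ℕ) = (j : ℕ) then (if (i : ℕ) = 0 then 3 else 1)
    else if (i : ℕ) = (j : ℕ) + 1 then 1
    else if (j : ℕ) = (i : ℕ) + 1 then 2
    else 0

/-!
Each `H_n` is the leading `n × n` block of one infinite tridiagonal matrix `f`. Expanding the
permanent `p n` of such a block along its last row, and the one surviving off-diagonal minor along
its last column, gives the continuant recurrence
`p (n + 2) = f (n + 1) (n + 1) * p (n + 1) + f (n + 1) n * f n (n + 1) * p n`.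
For `H_n` this is `p (n + 2) = p (n + 1) + 2 * p n`, the Jacobsthal recurrence, and
`p 0 = 1 = J 2`, `p 1 = 3 = J 3`.
-/

namespace Matrix

variable {R : Type*} [CommSemiring R]

theorem permanent_succ_column_zero {n : ℕ} (A : Matrix (Fin (n + 1)) (Fin (n + 1)) R) :
    A.permanent = ∑ i, A i 0 * (A.submatrix i.succAbove Fin.succ).permanent := by
  rw [Matrix.permanent, Finset.univ_perm_fin_succ, ← Finset.univ_product_univ, Finset.sum_map,
    Finset.sum_product]
  refine Finset.sum_congr rfl fun p _ => Fin.cases ?_ (fun i => ?_) p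
  · simp [Matrix.permanent, Finset.mul_sum, Fin.prod_univ_succ]
  · rw [Matrix.permanent, Finset.mul_sum]
    refine Fintype.sum_equiv (Equiv.mulLeft i.cycleRange) _ _ fun σ => ?_
    simp [Fin.prod_univ_succ, Fin.succAbove_cycleRange]

theorem permanent_succ_row_zero {n : ℕ} (A : Matrix (Fin (n + 1)) (Fin (n + 1)) R) :
    A.permanent = ∑ j, A 0 j * (A.submatrix Fin.succ j.succAbove).permanent := by
  rw [← permanent_transpose A, permanent_succ_column_zero]
  simp only [transpose_apply, ← transpose_submatrix, permanent_transpose]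

theorem permanent_succ_row {n : ℕ} (A : Matrix (Fin (n + 1)) (Fin (n + 1)) R) (i : Fin (n + 1)) :
    A.permanent = ∑ j, A i j * (A.submatrix i.succAbove j.succAbove).permanent := by
  rw [← permanent_permute_cols i.cycleRange.symm A, permanent_succ_row_zero]
  simp [submatrix_submatrix, Function.comp_def, Fin.cycleRange_symm_succ]

theorem permanent_succ_column {n : ℕ} (A : Matrix (Fin (n + 1)) (Fin (n + 1)) R)
    (j : Fin (n + 1)) :
    A.permanent = ∑ i, A i j * (A.submatrix i.succAbove j.succAbove).permanent := by
  rw [← permanent_transpose A, permanent_succ_row _ j]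
  simp only [transpose_apply, ← transpose_submatrix, permanent_transpose]

end Matrix

theorem permanent_eq_matrix_permanent {n : ℕ} (A : Matrix (Fin n) (Fin n) ℤ) :
    permanent A = A.permanent :=
  Matrix.permanent_transpose A

def leadingBlock {R : Type*} (f : ℕ → ℕ → R) (n : ℕ) : Matrix (Fin n) (Fin n) R :=
  Matrix.of fun i j => f i j

theorem leadingBlock_submatrix_castSucc {R : Type*} (f : ℕ → ℕ → R) (n : ℕ) :
    (leadingBlock f (n + 1)).submatrix Fin.castSucc Fin.castSucc = leadingBlock f n := by
  ext i j
  simp [leadingBlock]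

theorem permanent_leadingBlock_succ_succ {R : Type*} [CommSemiring R] (f : ℕ → ℕ → R)
    (hf : ∀ i j, i + 1 < j ∨ j + 1 < i → f i j = 0) (n : ℕ) :
    (leadingBlock f (n + 2)).permanent =
      f (n + 1) (n + 1) * (leadingBlock f (n + 1)).permanent +
        f (n + 1) n * f n (n + 1) * (leadingBlock f n).permanent := by
  have hcol : (Fin.last n).castSucc.succAbove ∘ Fin.castSucc = Fin.castSucc ∘ Fin.castSucc :=
    funext fun j => Fin.succAbove_castSucc_of_lt _ _ (Fin.castSucc_lt_last j)
  have hminor : ((leadingBlock f (n + 2)).submatrix Fin.castSucc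
      (Fin.last n).castSucc.succAbove).permanent = f n (n + 1) * (leadingBlock f n).permanent := by
    rw [Matrix.permanent_succ_column _ (Fin.last n), Fin.sum_univ_castSucc,
      Finset.sum_eq_zero fun i _ => ?_, zero_add]
    · rw [Fin.succAbove_last, Matrix.submatrix_submatrix, hcol, ← Matrix.submatrix_submatrix,
        leadingBlock_submatrix_castSucc, leadingBlock_submatrix_castSucc, Matrix.submatrix_apply,
        Fin.succAbove_castSucc_self]
      rfl
    · exact mul_eq_zero_of_left (hf _ _ (Or.inl (by simp))) _
  rw [Matrix.permanent_succ_row _ (Fin.last (n + 1)), Fin.sum_univ_castSucc,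
    Fin.sum_univ_castSucc, Finset.sum_eq_zero fun j _ => ?_, zero_add]
  · simp only [Fin.succAbove_last, hminor, leadingBlock_submatrix_castSucc]
    rw [add_comm, ← mul_assoc]
    rfl
  · exact mul_eq_zero_of_left (hf _ _ (Or.inr (by simp))) _

def hmatEntry (i j : ℕ) : ℤ :=
  if i = j then (if i = 0 then 3 else 1)
  else if i = j + 1 then 1
  else if j = i + 1 then 2
  else 0

theorem Hmat_eq_leadingBlock (n : ℕ) : Hmat n = leadingBlock hmatEntry n := rfl

theorem hmatEntry_eq_zero {i j : ℕ} (h : i + 1 < j ∨ j + 1 < i) : hmatEntry i j = 0 := by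
  unfold hmatEntry
  split_ifs <;> omega

theorem permanent_Hmat_succ_succ (n : ℕ) :
    permanent (Hmat (n + 2)) = permanent (Hmat (n + 1)) + 2 * permanent (Hmat n) := by
  simp only [permanent_eq_matrix_permanent, Hmat_eq_leadingBlock]
  rw [permanent_leadingBlock_succ_succ _ fun _ _ => hmatEntry_eq_zero]
  grind [hmatEntry]

theorem permanent_Hmat (n : ℕ) : permanent (Hmat n) = jacobsthal (n + 2) := by
  induction n using Nat.twoStepInduction with
  | zero => rfl
  | one => rfl
  | more n ih ih' => rw [permanent_Hmat_succ_succ, ih, ih']; rfl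
end

section
/- Let H_n be the n×n tridiagonal matrix with main diagonal (3, 1, ..., 1), subdiagonal all 1, superdiagonal all 2, and let S_n be the n×n matrix with s_{i+1,i} = -1 for 1 ≤ i ≤ n-1 and all other entries equal to 1. Then per(H_n) = det(H_n ∘ S_n), where ∘ denotes the Hadamard (entrywise) product. -/
def Smat (n : ℕ) : Matrix (Fin n) (Fin n) ℤ :=
  Matrix.of fun i j => if (i : ℕ) = (j : ℕ) + 1 then -1 else 1

open Finset Equiv

/-- A permutation of `Fin n` with `σ i ≤ i` for all `i` is the identity. -/
lemma perm_eq_one_of_le {n : ℕ} (σ : Equiv.Perm (Fin n))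
    (h : ∀ i : Fin n, (σ i : ℕ) ≤ (i : ℕ)) : σ = 1 := by
  have hsum : ∑ i : Fin n, ((σ i : ℕ)) = ∑ i : Fin n, (i : ℕ) :=
    Equiv.sum_comp σ (fun i => (i : ℕ))
  have key := (Finset.sum_eq_sum_iff_of_le (fun i _ => h i)).mp hsum
  ext i
  simpa using key i (mem_univ i)

/-- Sign of a "near-identity" permutation in terms of its descent count. -/
lemma sign_near_identity {n : ℕ} : ∀ (k : ℕ) (σ : Equiv.Perm (Fin n)),
    (∀ i : Fin n, (σ i : ℕ) = (i : ℕ) ∨ (σ i : ℕ) = (i : ℕ) + 1 ∨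
      (i : ℕ) = (σ i : ℕ) + 1) →
    (univ.filter fun i : Fin n => (i : ℕ) = (σ i : ℕ) + 1).card = k →
    Equiv.Perm.sign σ = (-1) ^ k := by
  intro k
  induction k with
  | zero =>
    intro σ hcond hcard
    have hempty : (univ.filter fun i : Fin n => (i : ℕ) = (σ i : ℕ) + 1) = ∅ :=
      Finset.card_eq_zero.mp hcard
    have hno : ∀ i : Fin n, ¬ ((i : ℕ) = (σ i : ℕ) + 1) := by
      intro i hi
      have : i ∈ (univ.filter fun i : Fin n => (i : ℕ) = (σ i : ℕ) + 1) :=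
        mem_filter.mpr ⟨mem_univ i, hi⟩
      simp [hempty] at this
    -- no descents: then σ i ≥ i for all i, so σ⁻¹ satisfies σ⁻¹ i ≤ i... directly: σ i ≥ i
    have hge : ∀ i : Fin n, (i : ℕ) ≤ (σ i : ℕ) := by
      intro i
      rcases hcond i with h1 | h2 | h3
      · omega
      · omega
      · exact absurd h3 (hno i)
    have : σ⁻¹ = 1 := by
      apply perm_eq_one_of_le
      intro i
      have := hge (σ⁻¹ i)
      simpa using this
    have hσ : σ = 1 := by
      have := congrArg (·⁻¹) this
      simpa using this
    simp [hσ]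
  | succ m ih =>
    intro σ hcond hcard
    -- pick the minimal descent i
    have hne : (univ.filter fun i : Fin n => (i : ℕ) = (σ i : ℕ) + 1).Nonempty := by
      rw [← Finset.card_pos, hcard]; omega
    set D := (univ.filter fun i : Fin n => (i : ℕ) = (σ i : ℕ) + 1) with hD
    obtain ⟨i, hiD⟩ := hne
    set i₀ := D.min' ⟨i, hiD⟩ with hi₀
    have hi₀D : i₀ ∈ D := D.min'_mem _
    have hi₀d : (i₀ : ℕ) = (σ i₀ : ℕ) + 1 := (mem_filter.mp hi₀D).2
    have hi₀pos : 0 < (i₀ : ℕ) := by omega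
    -- j = i₀ - 1
    have hjlt : (i₀ : ℕ) - 1 < n := by
      have := i₀.isLt; omega
    set j : Fin n := ⟨(i₀ : ℕ) - 1, hjlt⟩ with hj
    have hjval : (j : ℕ) = (i₀ : ℕ) - 1 := rfl
    have hjne : j ≠ i₀ := by
      intro h
      have := congrArg (Fin.val) h
      simp [hjval] at this
      omega
    -- show σ j = i₀
    have hσj : (σ j : ℕ) = (i₀ : ℕ) := by
      rcases hcond j with h1 | h2 | h3
      · -- σ j = j, but σ i₀ also has value j : contradiction with injectivity
        exfalso
        have hval : (σ j : ℕ) = (σ i₀ : ℕ) := by omega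
        have : σ j = σ i₀ := Fin.ext hval
        exact hjne (σ.injective this)
      · omega
      · -- j would be a smaller descent
        exfalso
        have hjD : j ∈ D := mem_filter.mpr ⟨mem_univ j, h3⟩
        have := D.min'_le j hjD
        rw [← hi₀] at this
        have : (i₀ : ℕ) ≤ (j : ℕ) := this
        omega
    -- τ = σ * swap j i₀
    set τ : Equiv.Perm (Fin n) := σ * Equiv.swap j i₀ with hτ
    have hτj : τ j = j := by
      have : τ j = σ i₀ := by simp [hτ, Equiv.Perm.mul_apply, Equiv.swap_apply_left]
      rw [this]
      apply Fin.ext; omega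
    have hτi : τ i₀ = i₀ := by
      have : τ i₀ = σ j := by simp [hτ, Equiv.Perm.mul_apply, Equiv.swap_apply_right]
      rw [this]
      apply Fin.ext; omega
    have hτother : ∀ x : Fin n, x ≠ j → x ≠ i₀ → τ x = σ x := by
      intro x hx1 hx2
      simp [hτ, Equiv.Perm.mul_apply, Equiv.swap_apply_of_ne_of_ne hx1 hx2]
    -- τ satisfies the condition
    have hτcond : ∀ x : Fin n, (τ x : ℕ) = (x : ℕ) ∨ (τ x : ℕ) = (x : ℕ) + 1 ∨
        (x : ℕ) = (τ x : ℕ) + 1 := by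
      intro x
      by_cases hx1 : x = j
      · left; rw [hx1, hτj]
      by_cases hx2 : x = i₀
      · left; rw [hx2, hτi]
      · rw [hτother x hx1 hx2]; exact hcond x
    -- descent set of τ is D minus i₀
    have hDτ : (univ.filter fun x : Fin n => (x : ℕ) = (τ x : ℕ) + 1) = D.erase i₀ := by
      ext x
      simp only [mem_filter, mem_univ, true_and, mem_erase, hD]
      constructor
      · intro hx
        by_cases hx1 : x = j
        · exfalso; rw [hx1, hτj] at hx; omega
        by_cases hx2 : x = i₀
        · exfalso; rw [hx2, hτi] at hx; omega
        · rw [hτother x hx1 hx2] at hx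
          exact ⟨hx2, hx⟩
      · rintro ⟨hx2, hx⟩
        by_cases hx1 : x = j
        · exfalso
          rw [hx1] at hx
          omega
        · rw [hτother x hx1 hx2]; exact hx
    have hcardτ : (univ.filter fun x : Fin n => (x : ℕ) = (τ x : ℕ) + 1).card = m := by
      rw [hDτ, Finset.card_erase_of_mem hi₀D, hcard]
      omega
    have hsignτ := ih τ hτcond hcardτ
    have hswap : Equiv.Perm.sign (Equiv.swap j i₀) = -1 := Equiv.Perm.sign_swap hjne
    have : Equiv.Perm.sign τ = Equiv.Perm.sign σ * (-1) := by
      rw [hτ, map_mul, hswap]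
    rw [hsignτ] at this
    have : Equiv.Perm.sign σ = (-1 : ℤˣ) ^ m * (-1) := by
      have h2 : Equiv.Perm.sign σ * (-1) * (-1) = (-1 : ℤˣ) ^ m * (-1) := by rw [← this]
      simpa using h2
    rw [this, pow_succ]

lemma term_eq {n : ℕ} (σ : Equiv.Perm (Fin n)) :
    ((Equiv.Perm.sign σ : ℤˣ) : ℤ) *
      ∏ i, (Matrix.hadamard (Hmat n) (Smat n)) i (σ i) = ∏ i, Hmat n i (σ i) := by
  by_cases hz : ∃ i : Fin n, Hmat n i (σ i) = 0
  · obtain ⟨i, hi⟩ := hz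
    have h1 : ∏ i, Hmat n i (σ i) = 0 := Finset.prod_eq_zero (mem_univ i) hi
    have h2 : ∏ i, (Matrix.hadamard (Hmat n) (Smat n)) i (σ i) = 0 :=
      Finset.prod_eq_zero (mem_univ i) (by simp [Matrix.hadamard, hi])
    rw [h1, h2, mul_zero]
  · push_neg at hz
    have hcond : ∀ i : Fin n, (σ i : ℕ) = (i : ℕ) ∨ (σ i : ℕ) = (i : ℕ) + 1 ∨
        (i : ℕ) = (σ i : ℕ) + 1 := by
      intro i
      have := hz i
      by_contra hc
      push_neg at hc
      apply this
      simp only [Hmat, Matrix.of_apply]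
      rw [if_neg, if_neg, if_neg]
      · omega
      · omega
      · omega
    set k := (univ.filter fun i : Fin n => (i : ℕ) = (σ i : ℕ) + 1).card with hk
    have hsign : Equiv.Perm.sign σ = (-1 : ℤˣ) ^ k := sign_near_identity k σ hcond rfl
    have hprodS : ∏ i : Fin n, Smat n i (σ i) = (-1 : ℤ) ^ k := by
      have : ∀ i : Fin n, Smat n i (σ i) =
          if (i : ℕ) = (σ i : ℕ) + 1 then (-1 : ℤ) else 1 := fun i => rfl
      rw [Finset.prod_congr rfl (fun i _ => this i), Finset.prod_ite]
      simp [hk]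
    have hsplit : ∏ i, (Matrix.hadamard (Hmat n) (Smat n)) i (σ i) =
        (∏ i, Hmat n i (σ i)) * ∏ i, Smat n i (σ i) := by
      rw [← Finset.prod_mul_distrib]
      rfl
    rw [hsplit, hprodS, hsign]
    push_cast
    have h1 : ((-1:ℤ)^k) * ((∏ i, Hmat n i (σ i)) * (-1:ℤ)^k) =
        (∏ i, Hmat n i (σ i)) * ((-1:ℤ)^(k+k)) := by rw [pow_add]; ring
    have h2 : ((-1:ℤ)) ^ (k + k) = 1 := Even.neg_one_pow ⟨k, rfl⟩
    rw [h1, h2, mul_one]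

theorem permanent_Hmat_eq_det_hadamard (n : ℕ) :
    permanent (Hmat n) = (Matrix.hadamard (Hmat n) (Smat n)).det := by
  rw [← Matrix.det_transpose, Matrix.det_apply']
  unfold permanent
  apply Finset.sum_congr rfl
  intro σ _
  have := term_eq σ
  rw [← this]
  simp only [Matrix.transpose_apply]
  norm_cast
end

section
/- For any tridiagonal n×n matrix A and the n×n matrix S with entries s_{i+1,i} = -1 on the subdiagonal and 1 everywhere else, per(A) = det(A ∘ S), where ∘ is the Hadamard product. -/
/-!
Expand both sides over permutations. Since `A` is tridiagonal, only permutations `σ` with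
`|σ i - i| ≤ 1` contribute, and for those the sign pattern `∏ i, s i (σ i)` equals `sign σ`,
so each term of the determinant is the corresponding term of the permanent. The sign identity
follows by peeling off the first index: either `σ` fixes `0`, or it swaps `0` and `1`, which
contributes one transposition to the sign and the single subdiagonal factor `s 1 0 = -1`.
-/

open Equiv Finset

lemma Smat_zero_left {n : ℕ} (j : Fin (n + 1)) : Smat (n + 1) 0 j = 1 := by
  simp [Smat]

lemma Smat_succ_succ {n : ℕ} (i j : Fin n) : Smat (n + 1) i.succ j.succ = Smat n i j := by
  simp [Smat]

lemma prod_Smat_decomposeFin_symm_zero {n : ℕ} (e : Perm (Fin n)) :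
    ∏ i, Smat (n + 1) i (Perm.decomposeFin.symm (0, e) i) = ∏ i, Smat n i (e i) := by
  simp [Fin.prod_univ_succ, Perm.decomposeFin_symm_apply_zero,
    Perm.decomposeFin_symm_apply_succ, Smat_zero_left, Smat_succ_succ]

lemma prod_Smat_swap_mul {m : ℕ} {σ : Perm (Fin (m + 2))} (h0 : σ 0 = 1) (h1 : σ 1 = 0) :
    ∏ i, Smat (m + 2) i ((swap 0 1 * σ : Perm _) i) = -∏ i, Smat (m + 2) i (σ i) := by
  have hrest (i : Fin m) : swap 0 1 (σ i.succ.succ) = σ i.succ.succ := by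
    refine swap_apply_of_ne_of_ne ?_ ?_
    · rw [← h1]; exact σ.injective.ne (by simp [Fin.ext_iff])
    · rw [← h0]; exact σ.injective.ne (Fin.succ_ne_zero _)
  simp only [Fin.prod_univ_succ (n := m + 1), Fin.prod_univ_succ (n := m), hrest,
    Perm.mul_apply, Fin.succ_zero_eq_one, h0, h1, swap_apply_left, swap_apply_right]
  simp [Smat]

namespace Equiv.Perm

def IsTridiagonal {n : ℕ} (σ : Perm (Fin n)) : Prop :=
  ∀ i, (σ i : ℕ) ≤ i + 1 ∧ (i : ℕ) ≤ σ i + 1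

variable {n : ℕ}

lemma exists_decomposeFin_symm_zero_eq {τ : Perm (Fin (n + 1))} (h0 : τ 0 = 0) :
    ∃ e, decomposeFin.symm (0, e) = τ := by
  have hτ := decomposeFin.symm_apply_apply τ
  generalize decomposeFin τ = q at hτ
  obtain ⟨p, e⟩ := q
  obtain rfl : p = 0 := by rw [← h0, ← hτ, decomposeFin_symm_apply_zero]
  exact ⟨e, hτ⟩

namespace IsTridiagonal

lemma of_decomposeFin_symm_zero {e : Perm (Fin n)}
    (h : (decomposeFin.symm (0, e)).IsTridiagonal) : e.IsTridiagonal := fun i => by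
  simpa [decomposeFin_symm_apply_succ] using h i.succ

lemma apply_one {σ : Perm (Fin (n + 2))} (hσ : σ.IsTridiagonal) (h0 : σ 0 = 1) : σ 1 = 0 := by
  obtain ⟨k, hσk⟩ := σ.surjective 0
  have hk1 : (k : ℕ) ≤ 1 := by simpa [hσk] using (hσ k).2
  have hk0 : k ≠ 0 := by rintro rfl; simp [h0] at hσk
  obtain rfl : k = 1 := Fin.ext (by
    have := Fin.val_ne_of_ne hk0
    rw [Fin.val_zero] at this
    rw [Fin.val_one]
    omega)
  exact hσk

lemma swap_mul {σ : Perm (Fin (n + 2))} (hσ : σ.IsTridiagonal) (h0 : σ 0 = 1) :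
    (swap 0 1 * σ).IsTridiagonal := by
  intro i
  have h1 := hσ.apply_one h0
  rcases eq_or_ne i 0 with rfl | hi0
  · simp [h0]
  rcases eq_or_ne i 1 with rfl | hi1
  · simp [h1]
  rw [mul_apply, swap_apply_of_ne_of_ne (h1 ▸ σ.injective.ne hi1) (h0 ▸ σ.injective.ne hi0)]
  exact hσ i

lemma prod_Smat_eq_sign {σ : Perm (Fin n)} (hσ : σ.IsTridiagonal) :
    ∏ i, Smat n i (σ i) = sign σ := by
  induction n with
  | zero => simp [Subsingleton.elim σ 1]
  | succ n ih =>
    have of_apply_zero (τ : Perm (Fin (n + 1))) (hτ : τ.IsTridiagonal) (h0 : τ 0 = 0) :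
        ∏ i, Smat (n + 1) i (τ i) = sign τ := by
      obtain ⟨e, rfl⟩ := exists_decomposeFin_symm_zero_eq h0
      rw [prod_Smat_decomposeFin_symm_zero, ih hτ.of_decomposeFin_symm_zero,
        decomposeFin.symm_sign]
      simp
    have h0 : (σ 0 : ℕ) ≤ 1 := by simpa using (hσ 0).1
    rcases Nat.le_one_iff_eq_zero_or_eq_one.1 h0 with h0 | h0
    · exact of_apply_zero σ hσ (Fin.ext h0)
    obtain ⟨m, rfl⟩ : ∃ m, n = m + 1 := ⟨n - 1, by have := (σ 0).isLt; omega⟩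
    have h0 : σ 0 = 1 := Fin.ext h0
    have key := of_apply_zero _ (hσ.swap_mul h0) (by simp [h0])
    rw [prod_Smat_swap_mul h0 (hσ.apply_one h0), sign_mul, sign_swap (by simp)] at key
    push_cast at key
    linarith

end IsTridiagonal

end Equiv.Perm

theorem permanent_tridiag_eq_det_hadamard (n : ℕ) (A : Matrix (Fin n) (Fin n) ℤ)
    (htri : ∀ i j : Fin n, ((i : ℕ) + 1 < (j : ℕ) ∨ (j : ℕ) + 1 < (i : ℕ)) → A i j = 0) :
    permanent A = (Matrix.hadamard A (Smat n)).det := by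
  rw [← Matrix.det_transpose, Matrix.det_apply, permanent]
  refine sum_congr rfl fun σ _ => ?_
  simp only [Matrix.transpose_apply, Matrix.hadamard_apply, prod_mul_distrib]
  by_cases hσ : σ.IsTridiagonal
  · rw [hσ.prod_Smat_eq_sign, Units.smul_def, smul_eq_mul, mul_left_comm, ← Units.val_mul,
      Int.units_mul_self, Units.val_one, mul_one]
  · obtain ⟨i, hi⟩ := not_forall.1 hσ
    rw [prod_eq_zero (mem_univ i) (htri i (σ i) (by omega)), zero_mul, smul_zero]
end
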